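/- arXiv:1304.2762 — 5 statements merged into one kernel-verified Lean document; each statement's English description precedes it below -/
import Mathlib

section
/- Let f be differentiable on an open interval containing [a,b] with a < b and f' integrable on [a,b]. Then f((a+b)/2) - (1/(b-a))∫_a^b f(x) dx = ((b-a)/4) ∫_0^1 (1-t) [ f'(ta + (1-t)(a+b)/2) - f'(tb + (1-t)(a+b)/2) ] dt. -/
open Set MeasureTheory intervalIntegral

/-!
For `c ∈ {a, b}` and `m = (a + b) / 2`, the substitution `x = t c + (1 - t) m` turns
`∫₀¹ (1 - t) f'(t c + (1 - t) m) dt` into `(c - m)⁻² ∫ₘᶜ (c - x) f'(x) dx`, and integration by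
parts evaluates the latter as `∫ₘᶜ f - (c - m) f(m)`. Since `a - m = -(b - m)`, the difference of
the two cases is `(2 / (b - a))² ((b - a) f(m) - ∫ₐᵇ f)`.
-/

variable {E : Type*} [NormedAddCommGroup E] [NormedSpace ℝ E]

theorem integral_sub_smul_deriv [CompleteSpace E] {f : ℝ → E} {m c : ℝ}
    (hf : DifferentiableOn ℝ f (uIcc m c)) (hf' : IntervalIntegrable (deriv f) volume m c) :
    ∫ x in m..c, (c - x) • deriv f x = (∫ x in m..c, f x) - (c - m) • f m := by
  have hparts := integral_smul_deriv_eq_deriv_smul_of_hasDerivAt (u := fun x ↦ c - x)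
    (u' := fun _ ↦ -1) (continuousOn_const.sub continuousOn_id) hf.continuousOn
    (fun x _ ↦ (hasDerivAt_id x).const_sub c)
    (fun x hx ↦ ((hf x (Ioo_subset_Icc_self hx)).differentiableAt
      (Icc_mem_nhds hx.1 hx.2)).hasDerivAt) intervalIntegrable_const hf'
  simp only [hparts, sub_self, zero_smul, neg_smul, one_smul, intervalIntegral.integral_neg]
  abel

theorem integral_one_sub_smul_comp (g : ℝ → E) {m c : ℝ} (hmc : c ≠ m) :
    ∫ t in (0:ℝ)..1, (1 - t) • g (t * c + (1 - t) * m) =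
      ((c - m) ^ 2)⁻¹ • ∫ x in m..c, (c - x) • g x := by
  have hcm : c - m ≠ 0 := sub_ne_zero.mpr hmc
  have hsubst : ∀ t : ℝ, (1 - t) • g (t * c + (1 - t) * m) =
      (c - m)⁻¹ • ((c - ((c - m) * t + m)) • g ((c - m) * t + m)) := fun t ↦ by
    rw [show t * c + (1 - t) * m = (c - m) * t + m by ring, smul_smul]
    congr 1
    field_simp
    ring
  simp only [hsubst, intervalIntegral.integral_smul,
    integral_comp_mul_add (fun x ↦ (c - x) • g x) hcm]
  simp only [mul_zero, zero_add, mul_one, sub_add_cancel, smul_smul, ← sq, inv_pow]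

theorem IntervalIntegrable.one_sub_smul_comp {g : ℝ → E} {m c : ℝ}
    (hg : IntervalIntegrable g volume m c) (hmc : c ≠ m) :
    IntervalIntegrable (fun t ↦ (1 - t) • g (t * c + (1 - t) * m)) volume 0 1 := by
  have hcm : c - m ≠ 0 := sub_ne_zero.mpr hmc
  have := (hg.comp_add_left m).comp_mul_right (c := c - m)
  simp only [sub_self, zero_div, div_self hcm] at this
  simpa only [show ∀ t, m + t * (c - m) = t * c + (1 - t) * m from fun t ↦ by ring]
    using this.continuousOn_smul (f := fun t ↦ 1 - t) (by fun_prop)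

theorem midpoint_identity_general
    (f : ℝ → ℝ) (a b : ℝ) (I : Set ℝ) (hIcc : Icc a b ⊆ I)
    (hab : a < b)
    (hf : DifferentiableOn ℝ f I)
    (hint : IntervalIntegrable (deriv f) volume a b) :
    f ((a + b) / 2) - (1 / (b - a)) * ∫ x in a..b, f x =
      ((b - a) / 4) *
        ∫ t in (0:ℝ)..1, (1 - t) *
          (deriv f (t * a + (1 - t) * ((a + b) / 2)) -
            deriv f (t * b + (1 - t) * ((a + b) / 2))) := by
  set m := (a + b) / 2 with hm
  have hm_mem : m ∈ uIcc a b := uIcc_of_le hab.le ▸ ⟨by linarith, by linarith⟩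
  have hsub : ∀ c ∈ uIcc a b, uIcc m c ⊆ uIcc a b := fun c hc ↦ uIcc_subset_uIcc hm_mem hc
  have hdiff : DifferentiableOn ℝ f (uIcc a b) := hf.mono (uIcc_of_le hab.le ▸ hIcc)
  have hfint : ∀ c ∈ uIcc a b, IntervalIntegrable f volume m c := fun c hc ↦
    (hdiff.continuousOn.mono (hsub c hc)).intervalIntegrable
  have half_int : ∀ c ∈ uIcc a b, c ≠ m →
      IntervalIntegrable (fun t ↦ (1 - t) * deriv f (t * c + (1 - t) * m)) volume 0 1 :=
    fun c hc hcm ↦ by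
      simpa only [smul_eq_mul] using (hint.mono_set (hsub c hc)).one_sub_smul_comp hcm
  have half : ∀ c ∈ uIcc a b, c ≠ m →
      ∫ t in (0:ℝ)..1, (1 - t) * deriv f (t * c + (1 - t) * m) =
        ((c - m) ^ 2)⁻¹ * ((∫ x in m..c, f x) - (c - m) * f m) := fun c hc hcm ↦ by
    have h := integral_one_sub_smul_comp (deriv f) hcm
    rw [integral_sub_smul_deriv (hdiff.mono (hsub c hc)) (hint.mono_set (hsub c hc))] at h
    simpa only [smul_eq_mul] using h
  have ham : a ≠ m := by linarith
  have hbm : b ≠ m := by linarith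
  simp_rw [mul_sub]
  rw [intervalIntegral.integral_sub (half_int a left_mem_uIcc ham) (half_int b right_mem_uIcc hbm),
    half a left_mem_uIcc ham, half b right_mem_uIcc hbm,
    ← intervalIntegral.integral_add_adjacent_intervals (hfint a left_mem_uIcc).symm
      (hfint b right_mem_uIcc), intervalIntegral.integral_symm m a,
    show a - m = -((b - a) / 2) by rw [hm]; ring, show b - m = (b - a) / 2 by rw [hm]; ring]
  have hba : b - a ≠ 0 := by linarith
  field_simp
  ring

theorem midpoint_identity
    (f : ℝ → ℝ) (a b : ℝ) (I : Set ℝ) (hI : IsOpen I) (hIcc : Icc a b ⊆ I)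
    (hab : a < b)
    (hf : DifferentiableOn ℝ f I)
    (hint : IntervalIntegrable (deriv f) volume a b) :
    f ((a + b) / 2) - (1 / (b - a)) * ∫ x in a..b, f x =
      ((b - a) / 4) *
        ∫ t in (0:ℝ)..1, (1 - t) *
          (deriv f (t * a + (1 - t) * ((a + b) / 2)) -
            deriv f (t * b + (1 - t) * ((a + b) / 2))) :=
  midpoint_identity_general f a b I hIcc hab hf hint
end

section
/- For p > 1 and 0 < a < b, |G(a,b) - L(a,b)| ≤ ((ln b - ln a)/(4(p+1)^{1/p})) [ A(a,b) + G(a,b) ], where G(a,b) = √(ab) is the geometric mean, A(a,b) = (a+b)/2 is the arithmetic mean, and L(a,b) = (b-a)/(ln b - ln a) is the logarithmic mean. -/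
/-!
Put `a = exp (m - u)` and `b = exp (m + u)` with `u = (log b - log a) / 2 > 0`. Then `G = exp m`,
`L = exp m * sinh u / u` and `A = exp m * cosh u`, so the inequality reduces to the elementary bound
`sinh u - u ≤ u² (cosh u + 1) / 4`, combined with `(p + 1) ^ (1 / p) ≤ 2` (Bernoulli). Both sides of
the hyperbolic bound vanish at `u = 0`, and by the half-angle formulas (`u = 2 v`) the derivative of
their difference is nonnegative as soon as `tanh² v ≤ v`, which follows from `tanh v ≤ min v 1`.
-/

open Real

lemma mul_sinh_nonneg (x : ℝ) : 0 ≤ x * sinh x := by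
  rcases le_total 0 x with hx | hx
  · exact mul_nonneg hx (sinh_nonneg_iff.2 hx)
  · exact mul_nonneg_of_nonpos_of_nonpos hx (sinh_nonpos_iff.2 hx)

lemma sinh_le_mul_cosh {x : ℝ} (hx : 0 ≤ x) : sinh x ≤ x * cosh x := by
  have hderiv (t : ℝ) : HasDerivAt (fun t ↦ t * cosh t - sinh t) (t * sinh t) t :=
    (((hasDerivAt_id' t).mul (hasDerivAt_cosh t)).sub (hasDerivAt_sinh t)).congr_deriv (by ring)
  simpa using monotone_of_hasDerivAt_nonneg hderiv mul_sinh_nonneg hx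

lemma cosh_sub_one_le_mul_cosh_add_one {x : ℝ} (hx : 0 ≤ x) :
    cosh x - 1 ≤ x / 2 * (cosh x + 1) := by
  obtain ⟨v, rfl⟩ : ∃ v, x = 2 * v := ⟨x / 2, by ring⟩
  have hv : 0 ≤ v := by linarith
  have hsq : sinh v * sinh v ≤ v * cosh v * cosh v :=
    mul_le_mul (sinh_le_mul_cosh hv) (sinh_lt_cosh v).le (sinh_nonneg_iff.2 hv) (by positivity)
  have hcosh := cosh_sq v
  rw [cosh_two_mul]
  nlinarith

lemma sinh_sub_self_le {x : ℝ} (hx : 0 ≤ x) : sinh x - x ≤ x ^ 2 / 4 * (cosh x + 1) := by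
  set f : ℝ → ℝ := fun t ↦ t ^ 2 / 4 * (cosh t + 1) - sinh t + t
  have hderiv (t : ℝ) :
      HasDerivAt f (t / 2 * (cosh t + 1) + t ^ 2 / 4 * sinh t - (cosh t - 1)) t :=
    ((((hasDerivAt_pow 2 t).div_const 4).mul ((hasDerivAt_cosh t).add_const 1)).sub
      (hasDerivAt_sinh t)).add (hasDerivAt_id' t) |>.congr_deriv (by push_cast; ring)
  have hmono : MonotoneOn f (Set.Ici 0) := by
    refine monotoneOn_of_hasDerivWithinAt_nonneg (convex_Ici 0)
      (fun t _ ↦ (hderiv t).continuousAt.continuousWithinAt)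
      (fun t _ ↦ (hderiv t).hasDerivWithinAt) fun t ht ↦ ?_
    rw [interior_Ici, Set.mem_Ioi] at ht
    have hcosh := cosh_sub_one_le_mul_cosh_add_one ht.le
    have hsinh : 0 ≤ t ^ 2 / 4 * sinh t := mul_nonneg (by positivity) (sinh_nonneg_iff.2 ht.le)
    linarith
  have hf0 : f 0 = 0 := by simp [f]
  have hfx := hmono Set.self_mem_Ici hx hx
  rw [hf0] at hfx
  simp only [f] at hfx
  linarith

lemma rpow_one_div_le_two {p : ℝ} (hp : 1 ≤ p) : (p + 1) ^ (1 / p) ≤ 2 := by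
  rw [one_div, rpow_inv_le_iff_of_pos (by linarith) zero_le_two (by linarith)]
  have hbernoulli := one_add_mul_self_le_rpow_one_add (s := 1) (by norm_num) hp
  norm_num at hbernoulli
  linarith

lemma abs_sqrt_mul_sub_logMean_le {a b : ℝ} (ha : 0 < a) (hab : a < b) :
    |√(a * b) - (b - a) / (log b - log a)| ≤ (log b - log a) / 8 * ((a + b) / 2 + √(a * b)) := by
  obtain ⟨m, u, hu, rfl, rfl⟩ : ∃ m u, 0 < u ∧ a = exp (m - u) ∧ b = exp (m + u) :=
    ⟨(log a + log b) / 2, (log b - log a) / 2, by linarith [log_lt_log ha hab],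
      by ring_nf; rw [exp_log ha], by ring_nf; rw [exp_log (ha.trans hab)]⟩
  have hsqrt : √(exp (m - u) * exp (m + u)) = exp m := by
    rw [← exp_add, show m - u + (m + u) = m + m by ring, exp_add, sqrt_mul_self (exp_pos m).le]
  have hdiff : exp (m + u) - exp (m - u) = 2 * exp m * sinh u := by
    rw [sinh_eq, exp_add, sub_eq_add_neg m u, exp_add]; ring
  have hsum : exp (m - u) + exp (m + u) = 2 * exp m * cosh u := by
    rw [cosh_eq, exp_add, sub_eq_add_neg m u, exp_add]; ring
  rw [log_exp, log_exp, hsqrt, hdiff, hsum, show m + u - (m - u) = 2 * u by ring]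
  have hsinh : 0 ≤ sinh u - u := sub_nonneg.2 (self_le_sinh_iff.2 hu.le)
  have hlogMean : 2 * exp m * sinh u / (2 * u) - exp m = exp m * (sinh u - u) / u := by
    field_simp
  calc |exp m - 2 * exp m * sinh u / (2 * u)| = exp m * (sinh u - u) / u := by
        rw [abs_sub_comm, hlogMean, abs_of_nonneg (by positivity)]
    _ ≤ exp m * (u ^ 2 / 4 * (cosh u + 1)) / u := by gcongr; exact sinh_sub_self_le hu.le
    _ = 2 * u / 8 * (2 * exp m * cosh u / 2 + exp m) := by field_simp; ring

theorem geometric_logarithmic_mean_ineq (a b p : ℝ) (ha : 0 < a) (hab : a < b)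
    (hp : 1 < p) :
    |Real.sqrt (a * b) - (b - a) / (Real.log b - Real.log a)| ≤
      ((Real.log b - Real.log a) / (4 * (p + 1) ^ (1 / p))) *
        ((a + b) / 2 + Real.sqrt (a * b)) := by
  have hlog : 0 < log b - log a := sub_pos.2 (log_lt_log ha hab)
  have hb : 0 < b := ha.trans hab
  calc _ ≤ (log b - log a) / 8 * ((a + b) / 2 + √(a * b)) := abs_sqrt_mul_sub_logMean_le ha hab
    _ ≤ _ := by
      gcongr
      linarith [rpow_one_div_le_two hp.le]
end

section
/- For p > 1 and 0 < a < b, A(a,b)/I(a,b) ≤ exp( ((b-a)/(3·2^{(2p+1)/p})) ( H(a,b)^{-1} + 2A(a,b)^{-1} ) ), where A(a,b) = (a+b)/2, H(a,b) = 2ab/(a+b) is the harmonic mean, and I(a,b) = (1/e)(b^b/a^a)^{1/(b-a)} is the identric mean. -/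
/-!
Writing `A = (a + b) / 2`, one has
`log A - log I = 1 - (a log (A / a) + b log (b / A)) / (b - a)`.
Bounding both logarithms below by `2 (y - x) / (y + x) ≤ log y - log x` (the first term of the
series of `log ((1 + t) / (1 - t))`) gives `log (A / I) ≤ (b - a)² / ((3a + b)(a + 3b))`,
which is at most `(b - a) / 24 · (H⁻¹ + 2 A⁻¹)` by a polynomial inequality;
finally `2 ^ ((2p + 1) / p) ≤ 8` for `p ≥ 1`.
-/

open Real

noncomputable def identricMean (a b : ℝ) : ℝ :=
  (1 / exp 1) * (b ^ b / a ^ a) ^ (1 / (b - a))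

lemma identricMean_pos {a b : ℝ} (ha : 0 < a) (hb : 0 < b) : 0 < identricMean a b := by
  unfold identricMean
  have : 0 < b ^ b / a ^ a := div_pos (rpow_pos_of_pos hb b) (rpow_pos_of_pos ha a)
  positivity

lemma log_identricMean {a b : ℝ} (ha : 0 < a) (hb : 0 < b) :
    log (identricMean a b) = (b * log b - a * log a) / (b - a) - 1 := by
  have hpow : 0 < b ^ b / a ^ a := div_pos (rpow_pos_of_pos hb b) (rpow_pos_of_pos ha a)
  rw [identricMean, log_mul (by positivity) (rpow_pos_of_pos hpow _).ne', log_rpow hpow,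
    log_div (rpow_pos_of_pos hb b).ne' (rpow_pos_of_pos ha a).ne', log_rpow hb, log_rpow ha,
    one_div, log_inv, log_exp]
  ring

lemma two_mul_sub_div_add_le_log_sub_log {x y : ℝ} (hx : 0 < x) (hxy : x ≤ y) :
    2 * (y - x) / (y + x) ≤ log y - log x := by
  have ht : 0 ≤ (y - x) / x := div_nonneg (sub_nonneg.mpr hxy) hx.le
  have hsum := hasSum_log_one_add ht
  have hlog : log (1 + (y - x) / x) = log y - log x := by
    rw [← log_div (by linarith) hx.ne']
    congr 1
    field_simp
    ring
  have hfirst :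
      2 * (1 / (2 * ((0 : ℕ) : ℝ) + 1)) * ((y - x) / x / ((y - x) / x + 2)) ^ (2 * 0 + 1)
        = 2 * (y - x) / (y + x) := by
    field_simp
    ring
  rw [← hfirst, ← hlog]
  exact le_hasSum hsum 0 fun k _ => by positivity

lemma log_div_identricMean_le {a b : ℝ} (ha : 0 < a) (hab : a < b) :
    log ((a + b) / 2) - log (identricMean a b) ≤ (b - a) ^ 2 / ((3 * a + b) * (a + 3 * b)) := by
  have hb : 0 < b := ha.trans hab
  have hba : 0 < b - a := sub_pos.mpr hab
  have hlow := two_mul_sub_div_add_le_log_sub_log ha (show a ≤ (a + b) / 2 by linarith)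
  have hhigh := two_mul_sub_div_add_le_log_sub_log (show 0 < (a + b) / 2 by linarith)
    (show (a + b) / 2 ≤ b by linarith)
  rw [log_identricMean ha hb]
  calc log ((a + b) / 2) - ((b * log b - a * log a) / (b - a) - 1)
      = 1 - (a * (log ((a + b) / 2) - log a) + b * (log b - log ((a + b) / 2))) / (b - a) := by
        field_simp
        ring
    _ ≤ 1 - (a * (2 * ((a + b) / 2 - a) / ((a + b) / 2 + a))
          + b * (2 * (b - (a + b) / 2) / (b + (a + b) / 2))) / (b - a) := by
        gcongr
    _ = (b - a) ^ 2 / ((3 * a + b) * (a + 3 * b)) := by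
        field_simp
        ring

lemma sq_sub_div_le_inv_harmonic_add_inv_arith {a b : ℝ} (ha : 0 < a) (hab : a ≤ b) :
    (b - a) ^ 2 / ((3 * a + b) * (a + 3 * b))
      ≤ (b - a) / 24 * ((2 * a * b / (a + b))⁻¹ + 2 * ((a + b) / 2)⁻¹) := by
  have hb : 0 < b := ha.trans_le hab
  have hba : 0 ≤ b - a := sub_nonneg.mpr hab
  have hpoly : 48 * a * b * (a + b) * (b - a)
      ≤ (a ^ 2 + 10 * a * b + b ^ 2) * (3 * a + b) * (a + 3 * b) := by
    nlinarith [mul_nonneg (sq_nonneg b) (sq_nonneg (3 * b - 4 * a)), mul_pos ha hb,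
      pow_pos ha 4, mul_pos (pow_pos ha 3) hb, mul_pos (pow_pos ha 2) (pow_pos hb 2)]
  rw [show (b - a) / 24 * ((2 * a * b / (a + b))⁻¹ + 2 * ((a + b) / 2)⁻¹)
      = (b - a) * (a ^ 2 + 10 * a * b + b ^ 2) / (48 * a * b * (a + b)) by field_simp; ring,
    div_le_div_iff₀ (by positivity) (by positivity)]
  nlinarith [mul_le_mul_of_nonneg_left hpoly hba]

lemma two_rpow_two_mul_add_one_div_le_eight {p : ℝ} (hp : 1 ≤ p) :
    (2 : ℝ) ^ ((2 * p + 1) / p) ≤ 8 := by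
  have hexp : (2 * p + 1) / p ≤ 3 := by
    rw [div_le_iff₀ (by linarith)]
    linarith
  calc (2 : ℝ) ^ ((2 * p + 1) / p)
      ≤ 2 ^ (3 : ℝ) := rpow_le_rpow_of_exponent_le (by norm_num) hexp
    _ = 8 := by norm_num

theorem arithmetic_identric_mean_ineq (a b p : ℝ) (ha : 0 < a) (hab : a < b)
    (hp : 1 < p) :
    ((a + b) / 2) / ((1 / Real.exp 1) * (b ^ b / a ^ a) ^ (1 / (b - a))) ≤
      Real.exp (((b - a) / (3 * 2 ^ ((2 * p + 1) / p))) *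
        ((2 * a * b / (a + b))⁻¹ + 2 * ((a + b) / 2)⁻¹)) := by
  change (a + b) / 2 / identricMean a b ≤ _
  have hb : 0 < b := ha.trans hab
  have hI := identricMean_pos ha hb
  rw [← log_le_iff_le_exp (by positivity), log_div (by positivity) hI.ne']
  calc log ((a + b) / 2) - log (identricMean a b)
      ≤ (b - a) ^ 2 / ((3 * a + b) * (a + 3 * b)) := log_div_identricMean_le ha hab
    _ ≤ (b - a) / 24 * ((2 * a * b / (a + b))⁻¹ + 2 * ((a + b) / 2)⁻¹) :=
        sq_sub_div_le_inv_harmonic_add_inv_arith ha hab.le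
    _ ≤ _ := by
        have h8 := two_rpow_two_mul_add_one_div_le_eight hp.le
        have hba : 0 < b - a := sub_pos.mpr hab
        gcongr
        linarith
end

section
/- For p > 1 and 0 < a < b, |H(a,b)^{-1} - L(a,b)^{-1}| ≤ (b-a)² B(p+1,p+1)^{1/p} · H(a³,b³)^{-1}, where H(x,y) = 2xy/(x+y) is the harmonic mean, L(a,b) = (b-a)/(ln b - ln a) is the logarithmic mean, and B is the Euler Beta function. -/
/-!
Both inverse means are averages over `[a, b]`: `H(a,b)⁻¹` averages the chord of `x ↦ 1/x`,
`L(a,b)⁻¹` averages `1/x` itself. Their difference is the average of the chord gap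
`(x - a)(b - x)/(abx)`; bounding `1/x` by its chord once more and integrating gives
`(b - a)²(a + b)/(12a²b²) ≤ (b - a)²/6 · H(a³,b³)⁻¹`.
Finally `B(p+1,p+1)^{1/p} ≥ 1/6`: integrate Bernoulli's inequality `1 + p s ≤ (1 + s)^p`
at `s = 6t(1 - t) - 1`, whose mean over `[0, 1]` is `0`.
-/

open Real intervalIntegral

theorem integral_sub_mul_sub (a b : ℝ) :
    ∫ x in a..b, (x - a) * (b - x) = (b - a) ^ 3 / 6 := by
  have hF : ∀ x, HasDerivAt (fun x => (x - a) ^ 2 * (b - a) / 2 - (x - a) ^ 3 / 3)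
      ((x - a) * (b - x)) x := fun x =>
    ((((hasDerivAt_id x).sub_const a).pow 2).mul_const (b - a) |>.div_const 2).sub
      ((((hasDerivAt_id x).sub_const a).pow 3).div_const 3) |>.congr_deriv (by simp; ring)
  rw [integral_eq_sub_of_hasDerivAt (fun x _ => hF x)
    (by apply Continuous.intervalIntegrable; fun_prop)]
  ring

theorem integral_sub_mul_sub_mul_add_sub (a b : ℝ) :
    ∫ x in a..b, (x - a) * (b - x) * (a + b - x) = (b - a) ^ 3 * (a + b) / 12 := by
  have hF : ∀ x, HasDerivAt
      (fun x => b * ((b - a) * (x - a) ^ 2 / 2 - (x - a) ^ 3 / 3) - (b - a) * (x - a) ^ 3 / 3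
        + (x - a) ^ 4 / 4)
      ((x - a) * (b - x) * (a + b - x)) x := fun x => by
    have hu := (hasDerivAt_id x).sub_const a
    exact ((((hu.pow 2).const_mul (b - a)).div_const 2).sub ((hu.pow 3).div_const 3)).const_mul b
      |>.sub (((hu.pow 3).const_mul (b - a)).div_const 3) |>.add ((hu.pow 4).div_const 4)
      |>.congr_deriv (by simp; ring)
  rw [integral_eq_sub_of_hasDerivAt (fun x _ => hF x)
    (by apply Continuous.intervalIntegrable; fun_prop)]
  ring

theorem pos_of_mem_uIcc {a b x : ℝ} (ha : 0 < a) (hb : 0 < b) (hx : x ∈ Set.uIcc a b) : 0 < x :=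
  (lt_min ha hb).trans_le hx.1

theorem intervalIntegrable_sub_mul_sub_div_self {a b : ℝ} (ha : 0 < a) (hb : 0 < b) :
    IntervalIntegrable (fun x => (x - a) * (b - x) / x) MeasureTheory.volume a b :=
  (ContinuousOn.div (by fun_prop) continuousOn_id
    fun x hx => (pos_of_mem_uIcc ha hb hx).ne').intervalIntegrable

theorem integral_sub_mul_sub_div_self {a b : ℝ} (ha : 0 < a) (hb : 0 < b) :
    ∫ x in a..b, (x - a) * (b - x) / x = (b - a) * (a + b) / 2 - a * b * (log b - log a) := by
  have hF : ∀ x ∈ Set.uIcc a b, HasDerivAt (fun x => (a + b) * x - x ^ 2 / 2 - a * b * log x)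
      ((x - a) * (b - x) / x) x := fun x hx => by
    have hx0 := (pos_of_mem_uIcc ha hb hx).ne'
    exact (((hasDerivAt_id x).const_mul (a + b)).sub ((hasDerivAt_pow 2 x).div_const 2)).sub
      ((hasDerivAt_log hx0).const_mul (a * b)) |>.congr_deriv (by field_simp; ring)
  rw [integral_eq_sub_of_hasDerivAt hF (intervalIntegrable_sub_mul_sub_div_self ha hb)]
  ring

theorem inv_le_add_sub_div_mul {a b x : ℝ} (ha : 0 < a) (hax : a ≤ x) (hxb : x ≤ b) :
    x⁻¹ ≤ (a + b - x) / (a * b) := by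
  have hx : 0 < x := ha.trans_le hax
  rw [inv_eq_one_div, div_le_div_iff₀ hx (by nlinarith)]
  nlinarith [mul_nonneg (sub_nonneg.2 hax) (sub_nonneg.2 hxb)]

theorem integral_sub_mul_sub_div_self_le {a b : ℝ} (ha : 0 < a) (hab : a ≤ b) :
    ∫ x in a..b, (x - a) * (b - x) / x ≤ (b - a) ^ 3 * (a + b) / (12 * (a * b)) := by
  have hb : 0 < b := ha.trans_le hab
  calc ∫ x in a..b, (x - a) * (b - x) / x
      ≤ ∫ x in a..b, (x - a) * (b - x) * (a + b - x) / (a * b) := by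
        refine integral_mono_on hab (intervalIntegrable_sub_mul_sub_div_self ha hb)
          (by apply Continuous.intervalIntegrable; fun_prop) fun x ⟨hax, hxb⟩ => ?_
        rw [div_eq_mul_inv, mul_div_assoc]
        exact mul_le_mul_of_nonneg_left (inv_le_add_sub_div_mul ha hax hxb)
          (mul_nonneg (sub_nonneg.2 hax) (sub_nonneg.2 hxb))
    _ = (b - a) ^ 3 * (a + b) / (12 * (a * b)) := by
        rw [integral_div, integral_sub_mul_sub_mul_add_sub, div_div]

theorem inv_six_rpow_le_integral_rpow_mul_rpow {p : ℝ} (hp : 1 ≤ p) :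
    (6 : ℝ)⁻¹ ^ p ≤ ∫ t in (0 : ℝ)..1, t ^ p * (1 - t) ^ p := by
  have hpt : ∀ t ∈ Set.Icc (0 : ℝ) 1,
      6⁻¹ ^ p * (1 - p) + 6⁻¹ ^ p * (6 * p) * (t * (1 - t)) ≤ t ^ p * (1 - t) ^ p := by
    rintro t ⟨h0, h1⟩
    have hbern :=
      one_add_mul_self_le_rpow_one_add (s := 6 * (t * (1 - t)) - 1) (by nlinarith) hp
    rw [add_sub_cancel, mul_rpow (by norm_num) (by nlinarith), mul_rpow h0 (by linarith)] at hbern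
    have h6 : (6 : ℝ)⁻¹ ^ p * 6 ^ p = 1 := by
      rw [← mul_rpow (by norm_num) (by norm_num), inv_mul_cancel₀ (by norm_num), one_rpow]
    calc 6⁻¹ ^ p * (1 - p) + 6⁻¹ ^ p * (6 * p) * (t * (1 - t))
        = 6⁻¹ ^ p * (1 + p * (6 * (t * (1 - t)) - 1)) := by ring
      _ ≤ 6⁻¹ ^ p * (6 ^ p * (t ^ p * (1 - t) ^ p)) := by gcongr
      _ = t ^ p * (1 - t) ^ p := by rw [← mul_assoc, h6, one_mul]
  have hcont : Continuous fun t : ℝ => t ^ p := continuous_rpow_const (by linarith)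
  have hmean : ∫ t in (0 : ℝ)..1, t * (1 - t) = 6⁻¹ := by
    simpa using integral_sub_mul_sub (0 : ℝ) 1
  calc (6 : ℝ)⁻¹ ^ p
      = ∫ t in (0 : ℝ)..1, (6⁻¹ ^ p * (1 - p) + 6⁻¹ ^ p * (6 * p) * (t * (1 - t))) := by
        rw [integral_add intervalIntegrable_const
            (by apply Continuous.intervalIntegrable; fun_prop),
          integral_const, integral_const_mul, hmean]
        ring
    _ ≤ ∫ t in (0 : ℝ)..1, t ^ p * (1 - t) ^ p :=
        integral_mono_on zero_le_one (by apply Continuous.intervalIntegrable; fun_prop)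
          ((hcont.mul (hcont.comp (continuous_const.sub continuous_id))).intervalIntegrable _ _)
          hpt

theorem harmonic_logarithmic_mean_ineq (a b p : ℝ) (ha : 0 < a) (hab : a < b)
    (hp : 1 < p) :
    |(2 * a * b / (a + b))⁻¹ - ((b - a) / (Real.log b - Real.log a))⁻¹| ≤
      (b - a) ^ 2 * (∫ t in (0:ℝ)..1, t ^ p * (1 - t) ^ p) ^ (1 / p) *
        (2 * a ^ 3 * b ^ 3 / (a ^ 3 + b ^ 3))⁻¹ := by
  have hb : 0 < b := ha.trans hab
  have hba : 0 < b - a := sub_pos.2 hab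
  set I := ∫ x in a..b, (x - a) * (b - x) / x with hI
  have hgap :
      (2 * a * b / (a + b))⁻¹ - ((b - a) / (log b - log a))⁻¹ = I / (a * b * (b - a)) := by
    rw [hI, integral_sub_mul_sub_div_self ha hb, inv_div, inv_div]
    field_simp
  have hI0 : 0 ≤ I := integral_nonneg hab.le fun x ⟨hax, hxb⟩ =>
    div_nonneg (mul_nonneg (sub_nonneg.2 hax) (sub_nonneg.2 hxb)) (ha.trans_le hax).le
  have hB : (6 : ℝ)⁻¹ ≤ (∫ t in (0:ℝ)..1, t ^ p * (1 - t) ^ p) ^ (1 / p) :=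
    calc (6 : ℝ)⁻¹ = ((6 : ℝ)⁻¹ ^ p) ^ (1 / p) := by
          rw [one_div, rpow_rpow_inv (by norm_num) (by positivity)]
      _ ≤ _ := by gcongr; exact inv_six_rpow_le_integral_rpow_mul_rpow hp.le
  have hcubes : a * b * (a + b) ≤ a ^ 3 + b ^ 3 := by
    nlinarith [mul_nonneg (add_pos ha hb).le (sq_nonneg (a - b))]
  rw [hgap, abs_of_nonneg (by positivity)]
  calc I / (a * b * (b - a))
      ≤ (b - a) ^ 3 * (a + b) / (12 * (a * b)) / (a * b * (b - a)) := by
        gcongr; exact integral_sub_mul_sub_div_self_le ha hab.le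
    _ ≤ (b - a) ^ 2 * 6⁻¹ * (2 * a ^ 3 * b ^ 3 / (a ^ 3 + b ^ 3))⁻¹ := by
        rw [inv_div, div_le_iff₀ (by positivity)]
        field_simp
        linarith
    _ ≤ _ := by gcongr
end

section
/- If |f'| is convex on [a,b] (a < b), f differentiable with f' integrable on [a,b], then |f((a+b)/2) - (1/(b-a))∫_a^b f(x)dx| ≤ ((b-a)/4)[ (|f'(a)| + |f'(b)| + 2|f'((a+b)/2)|)·(1/6) + (1/2)|f'((a+b)/2)| ]. -/
/-! Integrating by parts against the kernel `t - a` on `[a, c]` and `t - b` on `[c, b]`, where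
`c = (a + b) / 2`, turns `(b - a) * (f c - mean f)` into two integrals of the form
`∫ t in x..y, (t - x) * f' t`. Rescaled to `[0, 1]`, each is `(y - x)² ∫ s f'(x + (y - x) s) ds`,
and convexity bounds `|f'|` there by its chord, leaving `∫₀¹ s (1 - s) = 1/6` and `∫₀¹ s² = 1/3`.
This gives the coefficient `2/3` in front of `|f' c|`, below the `5/6` of the statement. -/

open Set MeasureTheory intervalIntegral

theorem integral_sub_mul_eq_sq_mul_integral_unitInterval (g : ℝ → ℝ) (x y : ℝ) :
    ∫ t in x..y, (t - x) * g t = (y - x) ^ 2 * ∫ s in (0:ℝ)..1, s * g (x + (y - x) * s) := by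
  have h := smul_integral_comp_add_mul (a := 0) (b := 1) (fun t => (t - x) * g t) (y - x) x
  simp only [mul_zero, add_zero, mul_one, add_sub_cancel, add_sub_cancel_left, smul_eq_mul] at h
  rw [← h, ← intervalIntegral.integral_const_mul, ← intervalIntegral.integral_const_mul]
  congr 1; ext s; ring

theorem integral_mul_one_sub_mul_add_mul (A B : ℝ) :
    ∫ s in (0:ℝ)..1, s * ((1 - s) * A + s * B) = A / 6 + B / 3 := by
  have h : (fun s : ℝ => s * ((1 - s) * A + s * B)) = fun s => A * s + (B - A) * s ^ 2 := by
    ext s; ring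
  rw [h, intervalIntegral.integral_add, intervalIntegral.integral_const_mul,
    intervalIntegral.integral_const_mul, integral_id, integral_pow]
  · norm_num; ring
  all_goals exact (by fun_prop : Continuous _).intervalIntegrable _ _

theorem ConvexOn.apply_add_sub_mul_le {g : ℝ → ℝ} {x y s : ℝ} (hconv : ConvexOn ℝ (uIcc x y) g)
    (hs : s ∈ Icc (0:ℝ) 1) :
    g (x + (y - x) * s) ≤ (1 - s) * g x + s * g y := by
  have h := hconv.2 left_mem_uIcc right_mem_uIcc (sub_nonneg.2 hs.2) hs.1 (sub_add_cancel 1 s)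
  simp only [smul_eq_mul] at h
  rwa [show (1 - s) * x + s * y = x + (y - x) * s by ring] at h

theorem abs_integral_sub_mul_le_of_convexOn_abs {g : ℝ → ℝ} {x y : ℝ}
    (hconv : ConvexOn ℝ (uIcc x y) fun t => |g t|) :
    |∫ t in x..y, (t - x) * g t| ≤ (y - x) ^ 2 * (|g x| / 6 + |g y| / 3) := by
  have hpoint : ∀ s ∈ Ioc (0:ℝ) 1,
      |s * g (x + (y - x) * s)| ≤ s * ((1 - s) * |g x| + s * |g y|) := fun s hs => by
    rw [abs_mul, abs_of_pos hs.1]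
    exact mul_le_mul_of_nonneg_left (hconv.apply_add_sub_mul_le (Ioc_subset_Icc_self hs)) hs.1.le
  rw [integral_sub_mul_eq_sq_mul_integral_unitInterval, abs_mul, abs_of_nonneg (sq_nonneg _),
    ← integral_mul_one_sub_mul_add_mul]
  refine mul_le_mul_of_nonneg_left ?_ (sq_nonneg _)
  calc |∫ s in (0:ℝ)..1, s * g (x + (y - x) * s)|
      ≤ ∫ s in (0:ℝ)..1, |s * g (x + (y - x) * s)| := abs_integral_le_integral_abs zero_le_one
    _ ≤ ∫ s in (0:ℝ)..1, s * ((1 - s) * |g x| + s * |g y|) := by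
      rw [integral_of_le zero_le_one, integral_of_le zero_le_one]
      exact integral_mono_of_nonneg (.of_forall fun s => abs_nonneg _)
        (by fun_prop : Continuous _).integrableOn_Ioc
        (ae_restrict_of_forall_mem measurableSet_Ioc hpoint)

theorem integral_sub_mul_deriv_eq {f f' : ℝ → ℝ} {x y : ℝ}
    (hf : ∀ t ∈ uIcc x y, HasDerivAt f (f' t) t) (hf' : IntervalIntegrable f' volume x y) :
    ∫ t in x..y, (t - x) * f' t = (y - x) * f y - ∫ t in x..y, f t := by
  simpa using integral_mul_deriv_eq_deriv_mul (fun t _ => (hasDerivAt_id t).sub_const x) hf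
    intervalIntegrable_const hf'

theorem sub_mul_sub_integral_eq_integral_sub_mul_deriv {f f' : ℝ → ℝ} {a b c : ℝ}
    (hc : c ∈ uIcc a b) (hf : ∀ t ∈ uIcc a b, HasDerivAt f (f' t) t)
    (hf' : IntervalIntegrable f' volume a b) :
    (b - a) * f c - ∫ t in a..b, f t =
      (∫ t in a..c, (t - a) * f' t) - ∫ t in b..c, (t - b) * f' t := by
  have hac := uIcc_subset_uIcc_left hc
  have hbc : uIcc b c ⊆ uIcc a b := uIcc_comm b c ▸ uIcc_subset_uIcc_right hc
  have hfi : IntervalIntegrable f volume a b :=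
    (HasDerivAt.continuousOn hf).intervalIntegrable
  rw [integral_sub_mul_deriv_eq (fun t ht => hf t (hac ht)) (hf'.mono_set hac),
    integral_sub_mul_deriv_eq (fun t ht => hf t (hbc ht)) (hf'.mono_set hbc),
    sub_sub_sub_comm, integral_interval_sub_interval_comm (hfi.mono_set hac) (hfi.mono_set hbc) hfi,
    integral_same]
  ring

theorem midpoint_ineq_convex_deriv
    (f : ℝ → ℝ) (a b : ℝ) (I : Set ℝ) (hI : IsOpen I) (hIcc : Icc a b ⊆ I)
    (hab : a < b)
    (hf : DifferentiableOn ℝ f I)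
    (hint : IntervalIntegrable (deriv f) volume a b)
    (hconv : ConvexOn ℝ (Icc a b) (fun x => |deriv f x|)) :
    |f ((a + b) / 2) - (1 / (b - a)) * ∫ x in a..b, f x| ≤
      ((b - a) / 4) *
        ((|deriv f a| + |deriv f b| + 2 * |deriv f ((a + b) / 2)|) * (1 / 6) +
          (1 / 2) * |deriv f ((a + b) / 2)|) := by
  rw [← uIcc_of_le hab.le] at hIcc hconv
  have hd : ∀ t ∈ uIcc a b, HasDerivAt f (deriv f t) t := fun t ht =>
    ((hf t (hIcc ht)).differentiableAt (hI.mem_nhds (hIcc ht))).hasDerivAt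
  have hc : (a + b) / 2 ∈ uIcc a b := by
    rw [uIcc_of_le hab.le]; constructor <;> linarith
  have hleft := abs_integral_sub_mul_le_of_convexOn_abs
    (hconv.subset (uIcc_subset_uIcc_left hc) (convex_uIcc _ _))
  have hright := abs_integral_sub_mul_le_of_convexOn_abs
    (hconv.subset (uIcc_comm b _ ▸ uIcc_subset_uIcc_right hc) (convex_uIcc _ _))
  have hba : 0 < b - a := sub_pos.2 hab
  calc |f ((a + b) / 2) - (1 / (b - a)) * ∫ x in a..b, f x|
      = |(b - a) * f ((a + b) / 2) - ∫ x in a..b, f x| / (b - a) := by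
        rw [← abs_of_pos hba, ← abs_div, abs_of_pos hba]
        congr 1; field_simp
    _ = |(∫ t in a..(a + b) / 2, (t - a) * deriv f t) - ∫ t in b..(a + b) / 2, (t - b) * deriv f t|
        / (b - a) := by
        rw [sub_mul_sub_integral_eq_integral_sub_mul_deriv hc hd hint]
    _ ≤ (((a + b) / 2 - a) ^ 2 * (|deriv f a| / 6 + |deriv f ((a + b) / 2)| / 3) +
          ((a + b) / 2 - b) ^ 2 * (|deriv f b| / 6 + |deriv f ((a + b) / 2)| / 3)) / (b - a) := by
        gcongr
        exact (abs_sub _ _).trans (add_le_add hleft hright)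
    _ ≤ _ := by
        rw [div_le_iff₀ hba]
        nlinarith [mul_nonneg (abs_nonneg (deriv f ((a + b) / 2))) (sq_nonneg (b - a))]
end
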